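/- Let k ≥ 4 be an integer and let R be a k-ring such that χ(R) = ω(R). Then R contains a k-hyperhole H as an induced subgraph such that χ(H) = χ(R). -/

import Mathlib

open SimpleGraph

/-- The closed neighborhood `N_G[v]` of a vertex `v`. -/
def closedNbhd {V : Type} (G : SimpleGraph V) (v : V) : Set V :=
  insert v (G.neighborSet v)

/-- `X` (indexed cyclically by `ZMod k`) is a ring partition of `G`:
a partition into `k` nonempty sets, each of which can be ordered so that the
closed neighborhoods are nested, with the last one covering `X i` and the first
one being exactly `X (i-1) ∪ X i ∪ X (i+1)`. -/
def IsRingPartition {V : Type} (G : SimpleGraph V) (k : ℕ) (X : ZMod k → Set V) : Prop :=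
  (∀ i, (X i).Nonempty) ∧
  (∀ v : V, ∃! i, v ∈ X i) ∧
  ∀ i, ∃ (m : ℕ) (hm : 0 < m) (u : Fin m → V),
    Function.Injective u ∧
    Set.range u = X i ∧
    (∀ j j' : Fin m, j ≤ j' → closedNbhd G (u j') ⊆ closedNbhd G (u j)) ∧
    X i ⊆ closedNbhd G (u ⟨m - 1, by omega⟩) ∧
    closedNbhd G (u ⟨0, hm⟩) = X (i - 1) ∪ X i ∪ X (i + 1)

/-- `G` is a `k`-ring. -/
def IsRing {V : Type} (G : SimpleGraph V) (k : ℕ) : Prop :=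
  ∃ X : ZMod k → Set V, IsRingPartition G k X

/-- `X` is a hyperhole partition of `G`: a partition into `k` nonempty cliques,
each complete to the two neighboring cliques and anticomplete to all remaining
vertices. -/
def IsHyperholePartition {V : Type} (G : SimpleGraph V) (k : ℕ) (X : ZMod k → Set V) : Prop :=
  (∀ i, (X i).Nonempty) ∧
  (∀ v : V, ∃! i, v ∈ X i) ∧
  (∀ i, G.IsClique (X i)) ∧
  (∀ i, ∀ x ∈ X i, ∀ y ∈ X (i - 1) ∪ X (i + 1), G.Adj x y) ∧
  (∀ i, ∀ x ∈ X i, ∀ y, y ∉ X (i - 1) ∪ X i ∪ X (i + 1) → ¬ G.Adj x y)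

/-- `G` is a `k`-hyperhole. -/
def IsHyperhole {V : Type} (G : SimpleGraph V) (k : ℕ) : Prop :=
  ∃ X : ZMod k → Set V, IsHyperholePartition G k X

/-- `X` is a hyperantihole partition of `G`: a partition into `k` nonempty cliques,
each complete to all vertices outside the two neighboring cliques (and itself),
and anticomplete to the two neighboring cliques. -/
def IsHyperantiholePartition {V : Type} (G : SimpleGraph V) (k : ℕ) (X : ZMod k → Set V) : Prop :=
  (∀ i, (X i).Nonempty) ∧
  (∀ v : V, ∃! i, v ∈ X i) ∧
  (∀ i, G.IsClique (X i)) ∧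
  (∀ i, ∀ x ∈ X i, ∀ y, y ∉ X (i - 1) ∪ X i ∪ X (i + 1) → G.Adj x y) ∧
  (∀ i, ∀ x ∈ X i, ∀ y ∈ X (i - 1) ∪ X (i + 1), ¬ G.Adj x y)

/-- `G` is a `k`-hyperantihole. -/
def IsHyperantihole {V : Type} (G : SimpleGraph V) (k : ℕ) : Prop :=
  ∃ X : ZMod k → Set V, IsHyperantiholePartition G k X

/-- A vertex is simplicial if its neighborhood is a clique. -/
def IsSimplicial {V : Type} (G : SimpleGraph V) (v : V) : Prop :=
  G.IsClique (G.neighborSet v)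

/-- A graph is perfect if every induced subgraph has chromatic number equal to
its clique number. -/
def IsPerfect {V : Type} (G : SimpleGraph V) : Prop :=
  ∀ S : Set V, (G.induce S).chromaticNumber = ((G.induce S).cliqueNum : ℕ∞)

/-- The function `f_k`: `⌊kn/(k-1)⌋` if `n ≡ 0, 1 (mod k-1)`, and `⌈kn/(k-1)⌉`
otherwise. -/
def ringF (k n : ℕ) : ℕ :=
  if n % (k - 1) ≤ 1 then k * n / (k - 1) else (k * n + (k - 2)) / (k - 1)

/-- The function `g_k`: `⌊kn/(k-1)⌋` if `n mod (k-1) ∈ {0, …, (k-3)/2}`, and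
`⌈kn/(k-1)⌉` if `n mod (k-1) ∈ {(k-1)/2, …, k-2}`. -/
def ringG (k n : ℕ) : ℕ :=
  if n % (k - 1) ≤ (k - 3) / 2 then k * n / (k - 1) else (k * n + (k - 2)) / (k - 1)

/-- The function `f_T`: `⌊5n/4⌋` if `n ≡ 0, 1 (mod 4)`, and `⌈5n/4⌉` if
`n ≡ 2, 3 (mod 4)`. -/
def fT (n : ℕ) : ℕ :=
  if n % 4 ≤ 1 then 5 * n / 4 else (5 * n + 3) / 4

/-- `G` contains the complete graph `K_m` as a minor, witnessed by `m` pairwise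
disjoint nonempty branch sets, each inducing a connected subgraph, with an edge
between every two of them. -/
def HasCompleteMinor {V : Type} (G : SimpleGraph V) (m : ℕ) : Prop :=
  ∃ S : Fin m → Set V,
    (∀ i, (S i).Nonempty) ∧
    (∀ i j, i ≠ j → Disjoint (S i) (S j)) ∧
    (∀ i, (G.induce (S i)).Connected) ∧
    (∀ i j, i ≠ j → ∃ x ∈ S i, ∃ y ∈ S j, G.Adj x y)

/-!
Take a maximum clique `K` of the ring and, in each part `X i`, a vertex `w i` whose closed
neighbourhood is all of `X (i - 1) ∪ X i ∪ X (i + 1)`. The sets `insert (w i) (K ∩ X i)` are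
cliques, consecutive ones are complete to each other (through `w i`, through `w (i + 1)`, or
inside `K`), and no edge leaves `X (i - 1) ∪ X i ∪ X (i + 1)` from `X i`; so they induce a
`k`-hyperhole. It contains `K`, hence its chromatic number is at least `ω(R) = χ(R)`.
-/

lemma mem_closedNbhd_iff {V : Type} {G : SimpleGraph V} {v w : V} :
    w ∈ closedNbhd G v ↔ w = v ∨ G.Adj v w :=
  Iff.rfl

namespace IsRingPartition

variable {V : Type} {G : SimpleGraph V} {k : ℕ} {X : ZMod k → Set V}

lemma eq_of_mem (hX : IsRingPartition G k X) {v : V} {i j : ZMod k} (hi : v ∈ X i)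
    (hj : v ∈ X j) : i = j :=
  (hX.2.1 v).unique hi hj

lemma exists_closedNbhd_eq (hX : IsRingPartition G k X) (i : ZMod k) :
    ∃ w ∈ X i, closedNbhd G w = X (i - 1) ∪ X i ∪ X (i + 1) := by
  obtain ⟨m, hm, u, -, hrange, -, -, hfirst⟩ := hX.2.2 i
  exact ⟨u ⟨0, hm⟩, hrange ▸ Set.mem_range_self _, hfirst⟩

lemma closedNbhd_subset (hX : IsRingPartition G k X) {i : ZMod k} {x : V} (hx : x ∈ X i) :
    closedNbhd G x ⊆ X (i - 1) ∪ X i ∪ X (i + 1) := by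
  obtain ⟨m, hm, u, -, hrange, hnest, -, hfirst⟩ := hX.2.2 i
  obtain ⟨j, rfl⟩ := hrange ▸ hx
  exact hfirst ▸ hnest ⟨0, hm⟩ j (Fin.le_def.mpr (Nat.zero_le _))

lemma subset_closedNbhd (hX : IsRingPartition G k X) {i : ZMod k} {x : V} (hx : x ∈ X i) :
    X i ⊆ closedNbhd G x := by
  obtain ⟨m, hm, u, -, hrange, hnest, hlast, -⟩ := hX.2.2 i
  obtain ⟨j, rfl⟩ := hrange ▸ hx
  exact hlast.trans (hnest j _ (Fin.le_def.mpr (Nat.le_sub_one_of_lt j.isLt)))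

lemma isClique (hX : IsRingPartition G k X) (i : ZMod k) : G.IsClique (X i) :=
  fun _ hx _ hy hxy => (mem_closedNbhd_iff.mp (hX.subset_closedNbhd hx hy)).resolve_left hxy.symm

lemma eq_or_eq_or_eq_of_adj (hX : IsRingPartition G k X) {i j : ZMod k} {x y : V}
    (hx : x ∈ X i) (hy : y ∈ X j) (hxy : G.Adj x y) : j = i - 1 ∨ j = i ∨ j = i + 1 := by
  rcases hX.closedNbhd_subset hx (Or.inr hxy) with (h | h) | h
  · exact Or.inl (hX.eq_of_mem hy h)
  · exact Or.inr (Or.inl (hX.eq_of_mem hy h))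
  · exact Or.inr (Or.inr (hX.eq_of_mem hy h))

lemma adj_of_closedNbhd_eq [Nontrivial (ZMod k)] (hX : IsRingPartition G k X) {i : ZMod k}
    {w y : V} (hw : w ∈ X i) (hwN : closedNbhd G w = X (i - 1) ∪ X i ∪ X (i + 1))
    (hy : y ∈ X (i - 1) ∪ X (i + 1)) : G.Adj w y := by
  have hyw : y ≠ w := by
    rintro rfl
    rcases hy with hy | hy
    · exact one_ne_zero (by linear_combination hX.eq_of_mem hw hy)
    · exact one_ne_zero (by linear_combination -hX.eq_of_mem hw hy)
  have hyN : y ∈ closedNbhd G w := by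
    rw [hwN]
    rcases hy with hy | hy
    exacts [Or.inl (Or.inl hy), Or.inr hy]
  exact (mem_closedNbhd_iff.mp hyN).resolve_left hyw

end IsRingPartition

theorem isHyperhole_induce_iUnion {V : Type} {G : SimpleGraph V} {k : ℕ} (Y : ZMod k → Set V)
    (hne : ∀ i, (Y i).Nonempty) (hdisj : ∀ {v i j}, v ∈ Y i → v ∈ Y j → i = j)
    (hclique : ∀ i, G.IsClique (Y i)) (hsucc : ∀ i, ∀ x ∈ Y i, ∀ y ∈ Y (i + 1), G.Adj x y)
    (hlocal : ∀ {i j x y}, x ∈ Y i → y ∈ Y j → G.Adj x y → j = i - 1 ∨ j = i ∨ j = i + 1) :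
    IsHyperhole (G.induce (⋃ i, Y i)) k := by
  refine ⟨fun i => {v | (v : V) ∈ Y i}, fun i => ?_, fun v => ?_, fun i => ?_, ?_, ?_⟩
  · obtain ⟨x, hx⟩ := hne i
    exact ⟨⟨x, Set.mem_iUnion_of_mem i hx⟩, hx⟩
  · obtain ⟨i, hi⟩ := Set.mem_iUnion.mp v.2
    exact ⟨i, hi, fun j hj => hdisj hj hi⟩
  · exact fun x hx y hy hxy => hclique i hx hy (Subtype.coe_ne_coe.mpr hxy)
  · rintro i x hx y (hy | hy)
    · exact (hsucc (i - 1) y hy x (by rwa [sub_add_cancel])).symm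
    · exact hsucc i x hx y hy
  · intro i x hx y hy hxy
    obtain ⟨j, hj⟩ := Set.mem_iUnion.mp y.2
    have hjY : (y : V) ∈ Y j := hj
    rcases hlocal hx hjY hxy with rfl | rfl | rfl
    exacts [hy (Or.inl (Or.inl hjY)), hy (Or.inl (Or.inr hjY)), hy (Or.inr hjY)]

namespace IsRingPartition

variable {V : Type} {G : SimpleGraph V} {k : ℕ} {X : ZMod k → Set V}

theorem isHyperhole_induce_of_isClique [Nontrivial (ZMod k)] (hX : IsRingPartition G k X)
    {w : ZMod k → V} (hwX : ∀ i, w i ∈ X i)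
    (hwN : ∀ i, closedNbhd G (w i) = X (i - 1) ∪ X i ∪ X (i + 1)) {K : Set V}
    (hK : G.IsClique K) : IsHyperhole (G.induce (⋃ i, insert (w i) (K ∩ X i))) k := by
  have hsub : ∀ {i x}, x ∈ insert (w i) (K ∩ X i) → x ∈ X i := by
    rintro i x (rfl | hx)
    exacts [hwX i, hx.2]
  refine isHyperhole_induce_iUnion _ (fun i => Set.insert_nonempty _ _)
    (fun hi hj => hX.eq_of_mem (hsub hi) (hsub hj))
    (fun i => (hX.isClique i).subset fun _ => hsub) ?_
    (fun hx hy hxy => hX.eq_or_eq_or_eq_of_adj (hsub hx) (hsub hy) hxy)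
  intro i x hx y hy
  rcases hx with rfl | hx
  · exact hX.adj_of_closedNbhd_eq (hwX i) (hwN i) (Or.inr (hsub hy))
  rcases hy with rfl | hy
  · refine (hX.adj_of_closedNbhd_eq (hwX _) (hwN _) (Or.inl ?_)).symm
    rw [add_sub_cancel_right]
    exact hx.2
  refine hK hx.1 hy.1 fun hxy => ?_
  subst hxy
  exact one_ne_zero (by linear_combination -hX.eq_of_mem hx.2 hy.2)

end IsRingPartition

theorem chromaticNumber_induce_eq_of_isNClique_cliqueNum_subset {V : Type} [Finite V]
    {G : SimpleGraph V} (hχω : G.chromaticNumber = G.cliqueNum) {K : Finset V}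
    (hK : G.IsNClique G.cliqueNum K) {S : Set V} (hKS : ↑K ⊆ S) :
    (G.induce S).chromaticNumber = G.chromaticNumber := by
  classical
  refine le_antisymm (chromaticNumber_mono_of_hom (Embedding.induce S).toHom) ?_
  have hK' : (G.induce S).IsNClique G.cliqueNum (K.subtype (· ∈ S)) := by
    rwa [isNClique_induce_iff, Finset.subtype_map_of_mem fun _ hx => hKS hx]
  rw [hχω, ← hK'.card_eq]
  exact hK'.isClique.card_le_chromaticNumber

/-- If `R` is a `k`-ring with `χ(R) = ω(R)`, then `R` contains an induced
`k`-hyperhole `H` with `χ(H) = χ(R)`. -/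
theorem ring_chi_eq_omega_hyperhole {V : Type} [Fintype V]
    (k : ℕ) (hk : 4 ≤ k) (R : SimpleGraph V) (hR : IsRing R k)
    (hχω : R.chromaticNumber = (R.cliqueNum : ℕ∞)) :
    ∃ S : Set V, IsHyperhole (R.induce S) k ∧
      (R.induce S).chromaticNumber = R.chromaticNumber := by
  obtain ⟨X, hX⟩ := hR
  have : Nontrivial (ZMod k) := ZMod.nontrivial_iff.mpr (by omega)
  choose w hwX hwN using hX.exists_closedNbhd_eq
  obtain ⟨K, hK⟩ := R.exists_isNClique_cliqueNum
  refine ⟨_, hX.isHyperhole_induce_of_isClique hwX hwN hK.isClique,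
    chromaticNumber_induce_eq_of_isNClique_cliqueNum_subset hχω hK fun x hx => ?_⟩
  obtain ⟨i, hi, -⟩ := hX.2.1 x
  exact Set.mem_iUnion_of_mem i (Or.inr ⟨hx, hi⟩)
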